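/- Let η be a local configuration with radius r and x ∈ V_n a vertex. If a(n) + 2𝒱b(n) ≤ 0, then μ_{a,b}(I_x^η = 1) ≤ 2^{𝒱β_r} W_n(η). -/

import Mathlib

open scoped BigOperators ENNReal NNReal
open Filter

attribute [local instance] Classical.propDecidable

namespace Geo

/-- Vertex set of the `d`-dimensional lattice torus of size `n`:
`V_n = {0, …, n-1}^d` with componentwise arithmetic modulo `n`. -/
abbrev Vtx (d n : ℕ) := Fin d → ZMod n

/-- Torus distance between two elements of `ZMod n`:
`min ((u - v).val) ((v - u).val)`, i.e. the distance modulo `n`. -/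
def cd {n : ℕ} (u v : ZMod n) : ℕ := min (u - v).val (v - u).val

lemma cd_comm {n : ℕ} (u v : ZMod n) : cd u v = cd v u := min_comm _ _

/-- The lattice torus graph `G_n`: `x ∼ y` iff `x ≠ y` and `‖y - x‖_q ≤ ρ`
(`q = ⊤` is the `L^∞` norm; for finite `q ≥ 1`, `‖z‖_q ≤ ρ ↔ ∑ |z i|^q ≤ ρ^q`). -/
def torus (d n : ℕ) (q : ℝ≥0∞) (ρ : ℕ) : SimpleGraph (Vtx d n) where
  Adj x y := x ≠ y ∧
    (if q = ⊤ then ∀ i, cd (x i) (y i) ≤ ρ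
      else ∑ i, ((cd (x i) (y i) : ℝ)) ^ q.toReal ≤ (ρ : ℝ) ^ q.toReal)
  symm := ⟨by
    intro x y h
    refine ⟨h.1.symm, ?_⟩
    have key : ∀ i, cd (y i) (x i) = cd (x i) (y i) := fun i => cd_comm _ _
    simp only [key]
    exact h.2⟩
  loopless := ⟨fun x h => h.1 rfl⟩

/-- Configurations: `𝒳_n = {-1,+1}^{V_n}`, encoded by `Bool` (`true` is the state `+1`). -/
abbrev Config (d n : ℕ) := Vtx d n → Bool

/-- The spin `±1` of a state. -/
def spin (s : Bool) : ℝ := if s then 1 else -1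

variable {d n : ℕ}

section Gibbs

variable [NeZero n] (G : SimpleGraph (Vtx d n)) (a b : ℝ)

/-- Unnormalised Gibbs weight `exp(a ∑_x σ(x) + b ∑_{{x,y} ∈ E_n} σ(x)σ(y))`
(the sum over edges is written as half of the sum over ordered adjacent pairs). -/
noncomputable def gw (σ : Config d n) : ℝ :=
  Real.exp (a * ∑ x, spin (σ x) +
    b * ((∑ x, ∑ y, if G.Adj x y then spin (σ x) * spin (σ y) else 0) / 2))

/-- The Gibbs measure `μ_{a,b}` of an event `A`. -/
noncomputable def P (A : Set (Config d n)) : ℝ :=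
  (∑ σ, if σ ∈ A then gw G a b σ else 0) / ∑ σ, gw G a b σ

/-- Conditional probability `μ_{a,b}(A | B)`. -/
noncomputable def Pc (A B : Set (Config d n)) : ℝ :=
  P G a b (A ∩ B) / P G a b B

end Gibbs

/-- The event `A` belongs to `ℱ(S)`, the σ-algebra generated by the configurations on `S`. -/
def MeasOn (A : Set (Config d n)) (S : Set (Vtx d n)) : Prop :=
  ∀ σ τ : Config d n, (∀ x ∈ S, σ x = τ x) → (σ ∈ A ↔ τ ∈ A)

/-- The cylinder event of all configurations agreeing with `τ` on `S`. -/
def cyl (S : Set (Vtx d n)) (τ : Config d n) : Set (Config d n) :=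
  {σ | ∀ x ∈ S, σ x = τ x}

/-- Exterior neighbourhood `δS` of a set of vertices. -/
def nbhd (G : SimpleGraph (Vtx d n)) (S : Set (Vtx d n)) : Set (Vtx d n) :=
  {y | y ∉ S ∧ ∃ x ∈ S, G.Adj x y}

section FinPart

variable [NeZero n]

/-- Exterior neighbourhood `δS` (Finset version). -/
noncomputable def nbhdF (G : SimpleGraph (Vtx d n)) (S : Finset (Vtx d n)) :
    Finset (Vtx d n) :=
  Finset.univ.filter fun y => y ∉ S ∧ ∃ x ∈ S, G.Adj x y

/-- `𝒱`: the (common) number of neighbours of a vertex. -/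
noncomputable def nV (G : SimpleGraph (Vtx d n)) : ℕ :=
  (Finset.univ.filter fun y => G.Adj 0 y).card

/-- The ball `B(x,r)` for the graph distance. -/
noncomputable def ball (G : SimpleGraph (Vtx d n)) (x : Vtx d n) (r : ℕ) :
    Finset (Vtx d n) :=
  Finset.univ.filter fun y => G.dist x y ≤ r

/-- The ring `ℛ(x,r,R) = {y : r < dist(x,y) ≤ R}`. -/
noncomputable def ringF (G : SimpleGraph (Vtx d n)) (x : Vtx d n) (r R : ℕ) :
    Finset (Vtx d n) :=
  Finset.univ.filter fun y => r < G.dist x y ∧ G.dist x y ≤ R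

/-- `k(ζ)`: the number of positive vertices of the configuration `ζ` on the set `S`. -/
noncomputable def kC (S : Finset (Vtx d n)) (ζ : Config d n) : ℕ :=
  (S.filter fun x => ζ x = true).card

/-- Twice the number of edges joining two positive vertices of `ζ` inside `S`
(i.e. the number of ordered adjacent positive pairs). -/
noncomputable def op (G : SimpleGraph (Vtx d n)) (S : Finset (Vtx d n)) (ζ : Config d n) : ℕ :=
  ((S ×ˢ S).filter fun p => G.Adj p.1 p.2 ∧ ζ p.1 = true ∧ ζ p.2 = true).card

/-- The perimeter `γ(ζ) = 𝒱·k(ζ) - 2·|{edges inside V₊(ζ)}|`. -/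
noncomputable def gam (V : ℕ) (G : SimpleGraph (Vtx d n)) (S : Finset (Vtx d n))
    (ζ : Config d n) : ℤ :=
  (V : ℤ) * kC S ζ - op G S ζ

/-- The weight `W_n(ζ) = exp(2a·k(ζ) - 2b·γ(ζ))`. -/
noncomputable def W (a b : ℝ) (V : ℕ) (G : SimpleGraph (Vtx d n)) (S : Finset (Vtx d n))
    (ζ : Config d n) : ℝ :=
  Real.exp (2 * a * (kC S ζ : ℝ) - 2 * b * (gam V G S ζ : ℝ))

/-- The connection `conn(ζ,ζ')`: the number of edges joining a positive vertex of `ζ`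
in `S` to a positive vertex of `ζ'` in `S'`. -/
noncomputable def connC (G : SimpleGraph (Vtx d n)) (S S' : Finset (Vtx d n))
    (ζ ζ' : Config d n) : ℕ :=
  ((S ×ˢ S').filter fun p => G.Adj p.1 p.2 ∧ ζ p.1 = true ∧ ζ' p.2 = true).card

/-- The configuration `ζζ'`, equal to `ζ` on `S` and to `ζ'` elsewhere. -/
noncomputable def glue (S : Finset (Vtx d n)) (ζ ζ' : Config d n) : Config d n :=
  fun z => if z ∈ S then ζ z else ζ' z

/-- Local configurations with radius `r`: `𝒞_r = {-1,+1}^{B(0,r)}`. -/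
abbrev LC (G : SimpleGraph (Vtx d n)) (r : ℕ) :=
  ↥(ball G (0 : Vtx d n) r) → Bool

/-- Extension of a local configuration to a full configuration (negative outside `B(0,r)`). -/
noncomputable def extLC (G : SimpleGraph (Vtx d n)) (r : ℕ) (η : LC G r) : Config d n :=
  fun z => if h : z ∈ ball G (0 : Vtx d n) r then η ⟨z, h⟩ else false

/-- Number `k(η)` of positive vertices of a local configuration. -/
noncomputable def kL (G : SimpleGraph (Vtx d n)) (r : ℕ) (η : LC G r) : ℕ :=
  kC (ball G (0 : Vtx d n) r) (extLC G r η)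

/-- Perimeter `γ(η)` of a local configuration. -/
noncomputable def gamL (V : ℕ) (G : SimpleGraph (Vtx d n)) (r : ℕ) (η : LC G r) : ℤ :=
  gam V G (ball G (0 : Vtx d n) r) (extLC G r η)

/-- Weight `W_n(η)` of a local configuration. -/
noncomputable def WL (a b : ℝ) (V : ℕ) (G : SimpleGraph (Vtx d n)) (r : ℕ) (η : LC G r) : ℝ :=
  W a b V G (ball G (0 : Vtx d n) r) (extLC G r η)

/-- The translate `η_x` of a local configuration, as a full configuration
(`η_x(x + y) = η(y)` for `y ∈ B(0,r)`, negative elsewhere). -/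
noncomputable def transl (G : SimpleGraph (Vtx d n)) (r : ℕ) (x : Vtx d n) (η : LC G r) :
    Config d n :=
  fun z => if h : z - x ∈ ball G (0 : Vtx d n) r then η ⟨z - x, h⟩ else false

/-- The event `{I_x^η = 1}`: the local configuration `η` occurs on `B(x,r)`. -/
def occ (G : SimpleGraph (Vtx d n)) (r : ℕ) (x : Vtx d n) (η : LC G r) :
    Set (Config d n) :=
  {σ | ∀ y (h : y ∈ ball G (0 : Vtx d n) r), σ (x + y) = η ⟨y, h⟩}

/-- The number `X_n(η)` of copies of `η` in the graph. -/
noncomputable def Xn (G : SimpleGraph (Vtx d n)) (r : ℕ) (η : LC G r) (σ : Config d n) : ℕ :=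
  (Finset.univ.filter fun x : Vtx d n => σ ∈ occ G r x η).card

/-- The event `𝒜(x,R,W)`: some local configuration of weight at most `W` occurs on a ball
`B(y,r)` with `y ∈ B(x,R-r)`. -/
def AEv (a b : ℝ) (G : SimpleGraph (Vtx d n)) (r : ℕ) (x : Vtx d n) (R : ℕ) (Wt : ℝ) :
    Set (Config d n) :=
  {σ | ∃ y ∈ ball G x (R - r), ∃ η : LC G r,
    WL a b (nV G) G r η ≤ Wt ∧ σ ∈ occ G r y η}

/-- The event `𝒜_r(x,R,W)`: some local configuration of weight at most `W` occurs on a ball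
`B(y,r)` with `y` in the ring `ℛ(x,2r,R-r)`. -/
def AEvR (a b : ℝ) (G : SimpleGraph (Vtx d n)) (r : ℕ) (x : Vtx d n) (R : ℕ) (Wt : ℝ) :
    Set (Config d n) :=
  {σ | ∃ y ∈ ringF G x (2 * r) (R - r), ∃ ζ : LC G r,
    WL a b (nV G) G r ζ ≤ Wt ∧ σ ∈ occ G r y ζ}

/-- The event `ℋ_r(x,R,ℓ,W)`: two local configurations of weight exactly `W` occur at
centres `y, y'` of the ring `ℛ(x,2r,R-r)` with `2r < dist(y,y') ≤ ℓ`. -/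
def HEv (a b : ℝ) (G : SimpleGraph (Vtx d n)) (r : ℕ) (x : Vtx d n) (R ℓ : ℕ) (Wt : ℝ) :
    Set (Config d n) :=
  {σ | ∃ y ∈ ringF G x (2 * r) (R - r), ∃ y' ∈ ringF G x (2 * r) (R - r),
    ∃ ζ : LC G r, ∃ ζ' : LC G r,
      WL a b (nV G) G r ζ = Wt ∧ WL a b (nV G) G r ζ' = Wt ∧
      2 * r < G.dist y y' ∧ G.dist y y' ≤ ℓ ∧ σ ∈ occ G r y ζ ∧ σ ∈ occ G r y' ζ'}

end FinPart

end Geo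

/-! Since the torus is translation invariant, it is `𝒱`-regular and the Gibbs weight of `σ`
is, up to a constant factor, `exp (2a·k(σ) - 2b·γ(σ))` for the positive set of `σ` in the whole
graph. If `η` occurs on `B = B(x,r)`, setting every spin of `B ∪ δB` to `-1` splits this weight
into `W(η)` times the weight of the new configuration, up to a factor `exp (2(a + 𝒱b)·k)` with
`k` the number of positive vertices on `δB` (each of them lies on at most `2𝒱` ordered edges);
this factor is at most `1`. The new configuration together with `σ` on `δB` determines `σ`, so
summing over the event loses at most a factor `2^|δB| ≤ 2^(𝒱β_r)`. -/

open Finset Pointwise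

namespace Geo

variable {d n : ℕ}

lemma torus_adj_add_left (q : ℝ≥0∞) (ρ : ℕ) (t u v : Vtx d n) :
    (torus d n q ρ).Adj (t + u) (t + v) ↔ (torus d n q ρ).Adj u v := by
  simp only [torus, cd, Pi.add_apply, add_sub_add_left_eq_sub, ne_eq, add_right_inj]

variable {G : SimpleGraph (Vtx d n)}

lemma spin_eq_two_mul_sub_one (s : Bool) : spin s = 2 * s.toNat - 1 := by
  cases s <;> norm_num [spin]

lemma kC_eq_sum (S : Finset (Vtx d n)) (σ : Config d n) :
    (kC S σ : ℝ) = ∑ z ∈ S, ((σ z).toNat : ℝ) := by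
  rw [kC, natCast_card_filter]
  exact sum_congr rfl fun z _ => by cases σ z <;> simp

lemma op_eq_sum (S : Finset (Vtx d n)) (σ : Config d n) :
    (op G S σ : ℝ) =
      ∑ u ∈ S, ∑ v ∈ S, if G.Adj u v then ((σ u).toNat * (σ v).toNat : ℝ) else 0 := by
  rw [op, natCast_card_filter, sum_product]
  refine sum_congr rfl fun u _ => sum_congr rfl fun v _ => ?_
  by_cases h : G.Adj u v <;> cases σ u <;> cases σ v <;> simp [h]

lemma W_vadd_finset (htr : ∀ t u v : Vtx d n, G.Adj (t + u) (t + v) ↔ G.Adj u v)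
    (a b : ℝ) (V : ℕ) (x : Vtx d n) (S : Finset (Vtx d n)) {σ ζ : Config d n}
    (h : ∀ y ∈ S, σ (x + y) = ζ y) :
    W a b V G (x +ᵥ S) σ = W a b V G S ζ := by
  have hinj : Set.InjOn (x +ᵥ · : Vtx d n → Vtx d n) S := fun _ _ _ _ => add_left_cancel
  have hk : (kC (x +ᵥ S) σ : ℝ) = kC S ζ := by
    rw [kC_eq_sum, kC_eq_sum, vadd_finset_def, sum_image hinj]
    exact sum_congr rfl fun y hy => by rw [vadd_eq_add, h y hy]
  have hop : (op G (x +ᵥ S) σ : ℝ) = op G S ζ := by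
    rw [op_eq_sum, op_eq_sum, vadd_finset_def, sum_image hinj]
    refine sum_congr rfl fun u hu => ?_
    rw [sum_image hinj]
    exact sum_congr rfl fun v hv => by simp only [vadd_eq_add, htr, h u hu, h v hv]
  rw [W, W, gam, gam]
  push_cast
  rw [hk, hop]

variable [NeZero n]

lemma card_adj_eq_nV (htr : ∀ t u v : Vtx d n, G.Adj (t + u) (t + v) ↔ G.Adj u v)
    (u : Vtx d n) : #{v | G.Adj u v} = nV G := by
  rw [nV]
  refine card_nbij' (· - u) (u + ·) ?_ ?_ (fun v _ => by simp) (fun v _ => by simp)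
  · intro v hv
    simpa [← htr u 0 (v - u)] using hv
  · intro v hv
    simpa [← htr u 0 v] using hv

lemma sum_sum_ite_adj_left {V : ℕ} (hreg : ∀ u, #{v | G.Adj u v} = V) (f : Vtx d n → ℝ) :
    ∑ u, ∑ v, (if G.Adj u v then f u else 0) = V * ∑ u, f u := by
  rw [mul_sum]
  refine sum_congr rfl fun u _ => ?_
  rw [← sum_filter, sum_const, hreg, nsmul_eq_mul]

lemma sum_sum_ite_adj_right {V : ℕ} (hreg : ∀ u, #{v | G.Adj u v} = V) (f : Vtx d n → ℝ) :
    ∑ u, ∑ v, (if G.Adj u v then f v else 0) = V * ∑ u, f u := by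
  rw [sum_comm]
  simp_rw [G.adj_comm]
  exact sum_sum_ite_adj_left hreg f

lemma sum_spin_eq (σ : Config d n) :
    ∑ z, spin (σ z) = 2 * kC univ σ - Fintype.card (Vtx d n) := by
  simp only [spin_eq_two_mul_sub_one, sum_sub_distrib, ← mul_sum, kC_eq_sum, sum_const,
    card_univ, nsmul_one]

lemma sum_sum_adj_spin_mul_spin {V : ℕ} (hreg : ∀ u, #{v | G.Adj u v} = V) (σ : Config d n) :
    ∑ u, ∑ v, (if G.Adj u v then spin (σ u) * spin (σ v) else 0) =
      4 * op G univ σ - 4 * V * kC univ σ + V * Fintype.card (Vtx d n) := by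
  have hpair : ∀ u v, (if G.Adj u v then spin (σ u) * spin (σ v) else 0) =
      4 * (if G.Adj u v then ((σ u).toNat * (σ v).toNat : ℝ) else 0)
        - 2 * (if G.Adj u v then ((σ u).toNat : ℝ) else 0)
        - 2 * (if G.Adj u v then ((σ v).toNat : ℝ) else 0) + (if G.Adj u v then 1 else 0) := by
    intro u v
    split_ifs
    · rw [spin_eq_two_mul_sub_one, spin_eq_two_mul_sub_one]; ring
    · ring
  simp only [hpair, sum_add_distrib, sum_sub_distrib, ← mul_sum, op_eq_sum, kC_eq_sum,
    sum_sum_ite_adj_left hreg, sum_sum_ite_adj_right hreg, sum_const, card_univ, nsmul_one]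
  ring

lemma gw_eq_exp_mul_W {V : ℕ} (hreg : ∀ u, #{v | G.Adj u v} = V) (a b : ℝ) (σ : Config d n) :
    gw G a b σ = Real.exp ((b * V / 2 - a) * Fintype.card (Vtx d n)) * W a b V G univ σ := by
  rw [gw, W, ← Real.exp_add, sum_spin_eq, sum_sum_adj_spin_mul_spin hreg, gam]
  push_cast
  ring_nf

lemma gw_pos {a b : ℝ} (σ : Config d n) : 0 < gw G a b σ := Real.exp_pos _

lemma kC_univ_eq_add (S : Finset (Vtx d n)) (σ : Config d n) :
    (kC univ σ : ℝ) =
      kC S σ + kC (nbhdF G S) σ + kC univ (glue (S ∪ nbhdF G S) (fun _ => false) σ) := by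
  have hdisj : Disjoint S (nbhdF G S) :=
    disjoint_left.mpr fun z hz hz' => (mem_filter.mp hz').2.1 hz
  have hpt : ∀ z, ((σ z).toNat : ℝ) =
      (if z ∈ S ∪ nbhdF G S then ((σ z).toNat : ℝ) else 0) +
        ((glue (S ∪ nbhdF G S) (fun _ => false) σ z).toNat : ℝ) := by
    intro z
    by_cases hz : z ∈ S ∪ nbhdF G S <;> simp [glue, hz]
  simp only [kC_eq_sum]
  rw [sum_congr rfl fun z _ => hpt z, sum_add_distrib, sum_ite_mem, univ_inter,
    sum_union hdisj]

lemma op_univ_le_add {V : ℕ} (hreg : ∀ u, #{v | G.Adj u v} = V) (S : Finset (Vtx d n))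
    (σ : Config d n) :
    (op G univ σ : ℝ) ≤ op G S σ + op G univ (glue (S ∪ nbhdF G S) (fun _ => false) σ)
      + 2 * V * kC (nbhdF G S) σ := by
  set τ := glue (S ∪ nbhdF G S) (fun _ => false) σ
  -- An edge leaving `S` ends in `δS`, so a positive edge lies inside `S`, lies outside
  -- `S ∪ δS`, or has an endpoint in `δS`.
  have hpt : ∀ u v, (if G.Adj u v then ((σ u).toNat * (σ v).toNat : ℝ) else 0) ≤
      (if u ∈ S then (if v ∈ S then
          (if G.Adj u v then ((σ u).toNat * (σ v).toNat : ℝ) else 0) else 0) else 0)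
      + (if G.Adj u v then ((τ u).toNat * (τ v).toNat : ℝ) else 0)
      + (if G.Adj u v then (if u ∈ nbhdF G S then ((σ u).toNat : ℝ) else 0) else 0)
      + (if G.Adj u v then (if v ∈ nbhdF G S then ((σ v).toNat : ℝ) else 0) else 0) := by
    intro u v
    by_cases hadj : G.Adj u v
    · have hδ : ∀ {w z}, G.Adj w z → w ∈ S → z ∉ S → z ∈ nbhdF G S :=
        fun h hw hz => mem_filter.mpr ⟨mem_univ _, hz, _, hw, h⟩
      have h1 := @hδ u v hadj
      have h2 := @hδ v u hadj.symm
      by_cases hu : u ∈ S <;> by_cases hv : v ∈ S <;> by_cases hu' : u ∈ nbhdF G S <;>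
        by_cases hv' : v ∈ nbhdF G S <;> cases hσu : σ u <;> cases hσv : σ v <;>
        simp_all [τ, glue]
    · simp [hadj]
  rw [op_eq_sum, op_eq_sum, op_eq_sum, kC_eq_sum]
  refine (sum_le_sum fun u _ => sum_le_sum fun v _ => hpt u v).trans_eq ?_
  simp only [sum_add_distrib, sum_ite_irrel, sum_const_zero, sum_ite_mem, univ_inter,
    sum_sum_ite_adj_left hreg, sum_sum_ite_adj_right hreg]
  ring

lemma W_univ_le_mul {V : ℕ} (hreg : ∀ u, #{v | G.Adj u v} = V) {a b : ℝ} (hb : 0 ≤ b)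
    (hab : a + V * b ≤ 0) (S : Finset (Vtx d n)) (σ : Config d n) :
    W a b V G univ σ ≤
      W a b V G S σ * W a b V G univ (glue (S ∪ nbhdF G S) (fun _ => false) σ) := by
  rw [W, W, W, ← Real.exp_add, Real.exp_le_exp, gam, gam, gam]
  push_cast
  rw [kC_univ_eq_add (G := G) S σ]
  have hop := mul_le_mul_of_nonneg_left (op_univ_le_add hreg S σ) hb
  have hk : 0 ≤ (kC (nbhdF G S) σ : ℝ) := Nat.cast_nonneg _
  linarith [mul_nonpos_of_nonneg_of_nonpos hk hab]

lemma gw_le_W_mul_gw_glue {V : ℕ} (hreg : ∀ u, #{v | G.Adj u v} = V) {a b : ℝ} (hb : 0 ≤ b)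
    (hab : a + V * b ≤ 0) (S : Finset (Vtx d n)) (σ : Config d n) :
    gw G a b σ ≤ W a b V G S σ * gw G a b (glue (S ∪ nbhdF G S) (fun _ => false) σ) := by
  rw [gw_eq_exp_mul_W hreg, gw_eq_exp_mul_W hreg, mul_left_comm]
  exact mul_le_mul_of_nonneg_left (W_univ_le_mul hreg hb hab S σ) (Real.exp_nonneg _)

lemma sum_comp_glue_le (A : Finset (Config d n)) (S T : Finset (Vtx d n))
    (hA : ∀ σ ∈ A, ∀ τ ∈ A, ∀ z ∈ S, σ z = τ z) (f : Config d n → ℝ)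
    (hf : ∀ τ, 0 ≤ f τ) :
    ∑ σ ∈ A, f (glue (S ∪ T) (fun _ => false) σ) ≤ 2 ^ #T * ∑ τ, f τ := by
  set e : Config d n → (T → Bool) × Config d n :=
    fun σ => (fun z => σ z, glue (S ∪ T) (fun _ => false) σ)
  have he : Set.InjOn e A := by
    intro σ hσ τ hτ heq
    funext z
    by_cases hS : z ∈ S
    · exact hA σ hσ τ hτ z hS
    by_cases hT : z ∈ T
    · exact congrFun (congrArg Prod.fst heq) ⟨z, hT⟩
    simpa [e, glue, hS, hT] using congrFun (congrArg Prod.snd heq) z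
  calc ∑ σ ∈ A, f (glue (S ∪ T) (fun _ => false) σ) = ∑ p ∈ A.image e, f p.2 :=
        (sum_image (f := fun p => f p.2) he).symm
    _ ≤ ∑ p : (T → Bool) × Config d n, f p.2 :=
        sum_le_sum_of_subset_of_nonneg (subset_univ _) fun p _ _ => hf p.2
    _ = 2 ^ #T * ∑ τ, f τ := by simp [Fintype.sum_prod_type]

lemma card_nbhdF_le {V : ℕ} (hreg : ∀ u, #{v | G.Adj u v} = V) (S : Finset (Vtx d n)) :
    #(nbhdF G S) ≤ V * #S :=
  calc #(nbhdF G S) ≤ #(S.biUnion fun u => {v | G.Adj u v}) := by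
        refine card_le_card fun v hv => ?_
        obtain ⟨-, -, u, hu, hadj⟩ := mem_filter.mp hv
        exact mem_biUnion.mpr ⟨u, hu, mem_filter.mpr ⟨mem_univ _, hadj⟩⟩
    _ ≤ ∑ u ∈ S, #{v | G.Adj u v} := card_biUnion_le
    _ = V * #S := by rw [sum_congr rfl fun u _ => hreg u, sum_const, smul_eq_mul, mul_comm]

lemma eq_extLC_of_mem_occ {r : ℕ} {x : Vtx d n} {η : LC G r} {σ : Config d n}
    (hσ : σ ∈ occ G r x η) (y : Vtx d n) (hy : y ∈ ball G 0 r) :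
    σ (x + y) = extLC G r η y := by
  rw [extLC, dif_pos hy, hσ y hy]

lemma eq_on_vadd_ball_of_mem_occ {r : ℕ} {x : Vtx d n} {η : LC G r} {σ τ : Config d n}
    (hσ : σ ∈ occ G r x η) (hτ : τ ∈ occ G r x η) : ∀ z ∈ x +ᵥ ball G 0 r, σ z = τ z := by
  intro z hz
  obtain ⟨y, hy, rfl⟩ := mem_vadd_finset.mp hz
  rw [vadd_eq_add, eq_extLC_of_mem_occ hσ y hy, eq_extLC_of_mem_occ hτ y hy]

lemma gw_le_WL_mul_gw_glue (htr : ∀ t u v : Vtx d n, G.Adj (t + u) (t + v) ↔ G.Adj u v)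
    {a b : ℝ} (hb : 0 ≤ b) (hab : a + nV G * b ≤ 0) {r : ℕ} {x : Vtx d n} {η : LC G r}
    {σ : Config d n} (hσ : σ ∈ occ G r x η) :
    gw G a b σ ≤ WL a b (nV G) G r η *
      gw G a b (glue ((x +ᵥ ball G 0 r) ∪ nbhdF G (x +ᵥ ball G 0 r)) (fun _ => false) σ) := by
  rw [WL, ← W_vadd_finset htr _ _ _ x _ (eq_extLC_of_mem_occ hσ)]
  exact gw_le_W_mul_gw_glue (card_adj_eq_nV htr) hb hab _ σ

theorem statement4_general (d n r ρ : ℕ) [NeZero n] (q : ℝ≥0∞)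
    (a b : ℝ) (hb : 0 ≤ b)
    (G : SimpleGraph (Vtx d n)) (hG : G = torus d n q ρ)
    (hab : a + 2 * (nV G : ℝ) * b ≤ 0)
    (x : Vtx d n) (η : LC G r) :
    P G a b (occ G r x η) ≤
      (2 : ℝ) ^ (nV G * (ball G (0 : Vtx d n) r).card) * WL a b (nV G) G r η := by
  have htr : ∀ t u v : Vtx d n, G.Adj (t + u) (t + v) ↔ G.Adj u v :=
    hG ▸ torus_adj_add_left q ρ
  have hab' : a + nV G * b ≤ 0 := by linarith [mul_nonneg (Nat.cast_nonneg (α := ℝ) (nV G)) hb]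
  set B := x +ᵥ ball G 0 r
  set A : Finset (Config d n) := {σ | σ ∈ occ G r x η}
  have hcount := sum_comp_glue_le A B (nbhdF G B)
    (fun σ hσ τ hτ => eq_on_vadd_ball_of_mem_occ (mem_filter.mp hσ).2 (mem_filter.mp hτ).2)
    (gw G a b) fun τ => (gw_pos τ).le
  have hcard : #(nbhdF G B) ≤ nV G * #(ball G 0 r) :=
    (card_nbhdF_le (card_adj_eq_nV htr) B).trans_eq (by rw [card_vadd_finset])
  have hWL : 0 ≤ WL a b (nV G) G r η := Real.exp_nonneg _
  rw [P, div_le_iff₀ (sum_pos (fun τ _ => gw_pos τ) univ_nonempty), ← sum_filter]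
  calc ∑ σ ∈ A, gw G a b σ
      ≤ WL a b (nV G) G r η * ∑ σ ∈ A, gw G a b (glue (B ∪ nbhdF G B) (fun _ => false) σ) := by
        rw [mul_sum]
        exact sum_le_sum fun σ hσ => gw_le_WL_mul_gw_glue htr hb hab' (mem_filter.mp hσ).2
    _ ≤ WL a b (nV G) G r η * (2 ^ #(nbhdF G B) * ∑ τ, gw G a b τ) :=
        mul_le_mul_of_nonneg_left hcount hWL
    _ ≤ WL a b (nV G) G r η * (2 ^ (nV G * #(ball G 0 r)) * ∑ τ, gw G a b τ) := by
        gcongr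
        · exact sum_nonneg fun τ _ => (gw_pos τ).le
        · norm_num
    _ = _ := by ring

/-- Lemma 3.2, upper bound: if `a + 2𝒱b ≤ 0` then
`μ_{a,b}(I_x^η = 1) ≤ 2^{𝒱β_r} W_n(η)`. -/
theorem statement4 (d n r ρ : ℕ) [NeZero n] (q : ℝ≥0∞)
    (hd : 0 < d) (hr : 0 < r) (hρ : 0 < ρ) (hq : 1 ≤ q) (hn : 2 * ρ * r < n)
    (a b : ℝ) (ha : a < 0) (hb : 0 ≤ b)
    (G : SimpleGraph (Vtx d n)) (hG : G = torus d n q ρ)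
    (hab : a + 2 * (nV G : ℝ) * b ≤ 0)
    (x : Vtx d n) (η : LC G r) :
    P G a b (occ G r x η) ≤
      (2 : ℝ) ^ (nV G * (ball G (0 : Vtx d n) r).card) * WL a b (nV G) G r η :=
  statement4_general d n r ρ q a b hb G hG hab x η

end Geo
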